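/- arXiv:2502.02480 — 2 statements merged into one kernel-verified Lean document; each statement's English description precedes it below -/
import Mathlib

section
/- Let H : ℝⁿ → ℝ be differentiable, let J, R : ℝⁿ → ℝⁿˣⁿ assign to each state a skew-symmetric matrix J(x) and a symmetric positive semidefinite matrix R(x), let G : ℝⁿ → ℝⁿˣᵐ, and let u : ℝ → ℝᵐ be such that the supply rate t ↦ ⟨∇H(x(t)), G(x(t)) u(t)⟩ is integrable on [t₀, t₁]. If x : ℝ → ℝⁿ satisfies ẋ(t) = (J(x(t)) − R(x(t))) ∇H(x(t)) + G(x(t)) u(t) for all t ∈ [t₀, t₁], then H(x(t₁)) ≤ H(x(t₀)) + ∫_{t₀}^{t₁} ⟨∇H(x(t)), G(x(t)) u(t)⟩ dt (integrated dissipativity with respect to the supply rate). -/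
open Matrix RealInnerProductSpace

/-- The gradient of a function on `ℝⁿ` (Euclidean space), via Mathlib's `gradient`. -/
noncomputable def grad {n : ℕ} (H : EuclideanSpace ℝ (Fin n) → ℝ) :
    EuclideanSpace ℝ (Fin n) → EuclideanSpace ℝ (Fin n) := gradient H

/-!
Along a solution, `d/dt H(x) = ⟨∇H, (J - R) ∇H⟩ + ⟨∇H, G u⟩`. The quadratic form of the
skew-symmetric `J` vanishes and that of `R` is nonnegative, so the rate of change of `H` is at
most the supply rate, and integrating this differential inequality gives the claim.
-/

namespace Matrix

variable {ι 𝕜 : Type*} [Fintype ι] [CommRing 𝕜] [LinearOrder 𝕜] [IsStrictOrderedRing 𝕜]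

theorem dotProduct_mulVec_self_eq_zero_of_transpose_eq_neg {A : Matrix ι ι 𝕜} (hA : Aᵀ = -A)
    (v : ι → 𝕜) : v ⬝ᵥ A *ᵥ v = 0 := by
  have h : v ⬝ᵥ A *ᵥ v = -(v ⬝ᵥ A *ᵥ v) :=
    calc v ⬝ᵥ A *ᵥ v = Aᵀ *ᵥ v ⬝ᵥ v := by rw [dotProduct_mulVec, mulVec_transpose]
      _ = -(v ⬝ᵥ A *ᵥ v) := by rw [hA, neg_mulVec, neg_dotProduct, dotProduct_comm]
  exact self_eq_neg.mp h

theorem dotProduct_sub_mulVec_self_nonpos {J R : Matrix ι ι 𝕜} (hJ : Jᵀ = -J)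
    (hR : ∀ v : ι → 𝕜, 0 ≤ v ⬝ᵥ R *ᵥ v) (v : ι → 𝕜) : v ⬝ᵥ (J - R) *ᵥ v ≤ 0 := by
  rw [sub_mulVec, dotProduct_sub, dotProduct_mulVec_self_eq_zero_of_transpose_eq_neg hJ]
  simpa using hR v

end Matrix

theorem EuclideanSpace.inner_toLp_sub_mulVec_add_le {ι : Type*} [Fintype ι]
    {J R : Matrix ι ι ℝ} (hJ : Jᵀ = -J) (hR : ∀ v : ι → ℝ, 0 ≤ v ⬝ᵥ R *ᵥ v)
    (g : EuclideanSpace ℝ ι) (w : ι → ℝ) :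
    ⟪g, WithLp.toLp 2 ((J - R) *ᵥ g + w)⟫ ≤ ⟪g, WithLp.toLp 2 w⟫ := by
  rw [WithLp.toLp_add, inner_add_right, add_le_iff_nonpos_left,
    EuclideanSpace.inner_eq_star_dotProduct, dotProduct_comm]
  exact dotProduct_sub_mulVec_self_nonpos hJ hR g

theorem HasGradientAt.comp_hasDerivAt_real {F : Type*} [NormedAddCommGroup F]
    [InnerProductSpace ℝ F] [CompleteSpace F] {H : F → ℝ} {g : F} {x : ℝ → F} {x' : F} {t : ℝ}
    (hH : HasGradientAt H g (x t)) (hx : HasDerivAt x x' t) :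
    HasDerivAt (fun s => H (x s)) ⟪g, x'⟫ t :=
  hH.hasFDerivAt.comp_hasDerivAt t hx

theorem le_add_integral_of_hasDerivAt_le {f f' s : ℝ → ℝ} {a b : ℝ} (hab : a ≤ b)
    (hf : ∀ t ∈ Set.Icc a b, HasDerivAt f (f' t) t)
    (hs : IntervalIntegrable s MeasureTheory.volume a b)
    (hle : ∀ t ∈ Set.Ioo a b, f' t ≤ s t) : f b ≤ f a + ∫ t in a..b, s t := by
  have := intervalIntegral.sub_le_integral_of_hasDeriv_right_of_le hab
    (fun t ht => (hf t ht).continuousAt.continuousWithinAt)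
    (fun t ht => (hf t (Set.Ioo_subset_Icc_self ht)).hasDerivWithinAt)
    ((intervalIntegrable_iff_integrableOn_Icc_of_le hab).mp hs) hle
  linarith

theorem integrated_dissipativity_general {n m : ℕ}
    (H : EuclideanSpace ℝ (Fin n) → ℝ) (hH : Differentiable ℝ H)
    (J R : EuclideanSpace ℝ (Fin n) → Matrix (Fin n) (Fin n) ℝ)
    (G : EuclideanSpace ℝ (Fin n) → Matrix (Fin n) (Fin m) ℝ)
    (u : ℝ → EuclideanSpace ℝ (Fin m))
    (hJ : ∀ y, (J y)ᵀ = -(J y))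
    (hRpsd : ∀ y, ∀ v : Fin n → ℝ, 0 ≤ v ⬝ᵥ (R y).mulVec v)
    (t₀ t₁ : ℝ) (ht : t₀ ≤ t₁)
    (x : ℝ → EuclideanSpace ℝ (Fin n))
    (hsupply : IntervalIntegrable
      (fun t => ⟪grad H (x t), WithLp.toLp 2 ((G (x t)).mulVec (u t))⟫) MeasureTheory.volume t₀ t₁)
    (hx : ∀ t ∈ Set.Icc t₀ t₁, HasDerivAt x
      (WithLp.toLp 2 ((J (x t) - R (x t)).mulVec (grad H (x t)) + (G (x t)).mulVec (u t))) t) :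
    H (x t₁) ≤ H (x t₀) + ∫ t in t₀..t₁, ⟪grad H (x t), WithLp.toLp 2 ((G (x t)).mulVec (u t))⟫ :=
  le_add_integral_of_hasDerivAt_le ht
    (fun t htI => (hH (x t)).hasGradientAt.comp_hasDerivAt_real (hx t htI)) hsupply
    (fun _ _ => EuclideanSpace.inner_toLp_sub_mulVec_add_le (hJ _) (hRpsd _) _ _)

/-- Integrated dissipativity of the forced port-Hamiltonian system:
along a solution of `ẋ = (J(x) - R(x)) ∇H(x) + G(x) u(t)` on `[t₀, t₁]`, provided the
supply rate `t ↦ ⟨∇H(x(t)), G(x(t)) u(t)⟩` is integrable on `[t₀, t₁]`, one has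
`H(x(t₁)) ≤ H(x(t₀)) + ∫_{t₀}^{t₁} ⟨∇H(x(t)), G(x(t)) u(t)⟩ dt`. -/
theorem integrated_dissipativity {n m : ℕ}
    (H : EuclideanSpace ℝ (Fin n) → ℝ) (hH : Differentiable ℝ H)
    (J R : EuclideanSpace ℝ (Fin n) → Matrix (Fin n) (Fin n) ℝ)
    (G : EuclideanSpace ℝ (Fin n) → Matrix (Fin n) (Fin m) ℝ)
    (u : ℝ → EuclideanSpace ℝ (Fin m))
    (hJ : ∀ y, (J y)ᵀ = -(J y))
    (hRsym : ∀ y, (R y)ᵀ = R y)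
    (hRpsd : ∀ y, ∀ v : Fin n → ℝ, 0 ≤ v ⬝ᵥ (R y).mulVec v)
    (t₀ t₁ : ℝ) (ht : t₀ ≤ t₁)
    (x : ℝ → EuclideanSpace ℝ (Fin n))
    (hsupply : IntervalIntegrable
      (fun t => ⟪grad H (x t), WithLp.toLp 2 ((G (x t)).mulVec (u t))⟫) MeasureTheory.volume t₀ t₁)
    (hx : ∀ t ∈ Set.Icc t₀ t₁, HasDerivAt x
      (WithLp.toLp 2 ((J (x t) - R (x t)).mulVec (grad H (x t)) + (G (x t)).mulVec (u t))) t) :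
    H (x t₁) ≤ H (x t₀) + ∫ t in t₀..t₁, ⟪grad H (x t), WithLp.toLp 2 ((G (x t)).mulVec (u t))⟫ :=
  integrated_dissipativity_general H hH J R G u hJ hRpsd t₀ t₁ ht x hsupply hx
end

section
/- Let H : ℝⁿ → ℝ be convex, twice continuously differentiable, and satisfy H(0) = 0, ∇H(0) = 0, and positive definiteness of the Hessian of H at 0 (i.e., ⟨v, D(∇H)(0) v⟩ > 0 for all v ≠ 0). Then H is radially unbounded: H(x) → ∞ as ‖x‖ → ∞. -/
/-!
Along each ray `t ↦ H (t • v)` the function is convex with vanishing first and positive second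
derivative at `0`, so `H v > 0` for every `v ≠ 0`. By compactness `H` is bounded below on the unit
sphere by some `m > 0`, and convexity together with `H 0 = 0` makes `t ↦ H (t • u) / t`
nondecreasing, whence `H x ≥ m ‖x‖` once `‖x‖ ≥ 1`.
-/

open RealInnerProductSpace

open Set Filter Topology

theorem ContDiff.gradient {E : Type*} [NormedAddCommGroup E] [InnerProductSpace ℝ E]
    [CompleteSpace E] {f : E → ℝ} {n : WithTop ℕ∞} (hf : ContDiff ℝ (n + 1) f) :
    ContDiff ℝ n (gradient f) :=
  (InnerProductSpace.toDual ℝ E).symm.toContinuousLinearEquiv.contDiff.comp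
    (hf.fderiv_right le_rfl)

theorem ConvexOn.mul_le_apply_smul {E : Type*} [AddCommGroup E] [Module ℝ E] {f : E → ℝ}
    (hf : ConvexOn ℝ univ f) (h0 : f 0 = 0) (x : E) {t : ℝ} (ht : 1 ≤ t) :
    t * f x ≤ f (t • x) := by
  have ht₀ : 0 < t := one_pos.trans_le ht
  -- `x = t⁻¹ • (t • x) + (1 - t⁻¹) • 0`
  have h := hf.2 (mem_univ (t • x)) (mem_univ 0) (inv_nonneg.2 ht₀.le)
    (sub_nonneg.2 (inv_le_one_of_one_le₀ ht)) (add_sub_cancel _ _)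
  rw [smul_smul, inv_mul_cancel₀ ht₀.ne', one_smul, smul_zero, add_zero, h0, smul_zero,
    add_zero, smul_eq_mul] at h
  rwa [← le_inv_mul_iff₀ ht₀]

theorem ConvexOn.lt_apply_of_deriv_eq_zero_of_deriv2_pos {f f' : ℝ → ℝ} {a b c : ℝ}
    (hf : ConvexOn ℝ univ f) (hf' : ∀ t, HasDerivAt f (f' t) t) (hcrit : f' a = 0)
    (hf'' : HasDerivAt f' c a) (hc : 0 < c) (hab : a < b) : f a < f b := by
  have hslope : ∀ᶠ t in 𝓝[>] a, 0 < slope f' a t :=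
    (hasDerivAt_iff_tendsto_slope.1 hf'' |>.mono_left (nhdsGT_le_nhdsNE a)).eventually
      (eventually_gt_nhds hc)
  -- `f` lies above its tangents at `a` (slope `0`) and at some `t ∈ (a, b)` with `f' t > 0`.
  obtain ⟨t, hpos, hat, htb⟩ := (hslope.and (Ioo_mem_nhdsGT hab)).exists
  have hf't : 0 < f' t := pos_of_slope_pos hat hpos hcrit
  have hfat : 0 ≤ slope f a t := hcrit ▸ hf.le_slope_of_hasDerivAt trivial trivial hat (hf' a)
  have hftb : f' t ≤ slope f t b := hf.le_slope_of_hasDerivAt trivial trivial htb (hf' t)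
  rw [slope_def_field, le_div_iff₀ (sub_pos.2 hat), zero_mul, sub_nonneg] at hfat
  rw [slope_def_field, le_div_iff₀ (sub_pos.2 htb)] at hftb
  linarith [mul_pos hf't (sub_pos.2 htb)]

theorem ConvexOn.apply_zero_lt_of_inner_fderiv_gradient_pos {E : Type*} [NormedAddCommGroup E]
    [InnerProductSpace ℝ E] [CompleteSpace E] {H : E → ℝ} (hH : ConvexOn ℝ univ H)
    (hdiff : Differentiable ℝ H) (hgrad : DifferentiableAt ℝ (gradient H) 0)
    (hcrit : gradient H 0 = 0) {v : E} (hv : 0 < ⟪v, fderiv ℝ (gradient H) 0 v⟫) :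
    H 0 < H v := by
  have hline : ∀ t : ℝ, HasDerivAt (fun s : ℝ ↦ s • v) v t := fun t ↦ by
    simpa using (hasDerivAt_id t).smul_const v
  have hconv : ConvexOn ℝ univ fun t : ℝ ↦ H (t • v) :=
    hH.comp_linearMap (LinearMap.toSpanSingleton ℝ E v)
  have hderiv (t : ℝ) : HasDerivAt (fun s : ℝ ↦ H (s • v)) ⟪v, gradient H (t • v)⟫ t := by
    have := (hdiff (t • v)).hasGradientAt.hasFDerivAt.comp_hasDerivAt t (hline t)
    simpa [Function.comp_def, real_inner_comm] using this
  have hderiv2 : HasDerivAt (fun t : ℝ ↦ ⟪v, gradient H (t • v)⟫)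
      ⟪v, fderiv ℝ (gradient H) 0 v⟫ 0 := by
    have := hgrad.hasFDerivAt.comp_hasDerivAt_of_eq (0 : ℝ) (hline 0) (zero_smul ℝ v).symm
    exact (hasDerivAt_const 0 v).inner ℝ this |>.congr_deriv (by simp)
  simpa using
    hconv.lt_apply_of_deriv_eq_zero_of_deriv2_pos hderiv (by simp [hcrit]) hderiv2 hv one_pos

theorem ConvexOn.exists_pos_mul_norm_le {E : Type*} [NormedAddCommGroup E] [NormedSpace ℝ E]
    [FiniteDimensional ℝ E] {f : E → ℝ} (hf : ConvexOn ℝ univ f) (h0 : f 0 = 0)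
    (hpos : ∀ x ≠ 0, 0 < f x) : ∃ m > 0, ∀ x, 1 ≤ ‖x‖ → m * ‖x‖ ≤ f x := by
  rcases subsingleton_or_nontrivial E with hE | hE
  · exact ⟨1, one_pos, fun x hx ↦ by norm_num [Subsingleton.elim x 0] at hx⟩
  obtain ⟨u, hu, hmin⟩ := (isCompact_sphere (0 : E) 1).exists_isMinOn
    (NormedSpace.sphere_nonempty.2 zero_le_one) hf.locallyLipschitz.continuous.continuousOn
  refine ⟨f u, hpos u (ne_zero_of_mem_unit_sphere ⟨u, hu⟩), fun x hx ↦ ?_⟩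
  have hx₀ : ‖x‖ ≠ 0 := (one_pos.trans_le hx).ne'
  have hux : f u ≤ f (‖x‖⁻¹ • x) := hmin (by simp [norm_smul, hx₀])
  calc f u * ‖x‖ ≤ ‖x‖ * f (‖x‖⁻¹ • x) := by rw [mul_comm]; gcongr
    _ ≤ f x := by simpa [smul_smul, hx₀] using hf.mul_le_apply_smul h0 (‖x‖⁻¹ • x) hx

/-- A convex, twice continuously differentiable function `H` with
`H(0) = 0`, `∇H(0) = 0`, and positive definite Hessian at `0` is radially unbounded:
for every `M` there exists `K` such that `‖x‖ ≥ K` implies `H(x) ≥ M`. -/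
theorem convex_hamiltonian_radially_unbounded {n : ℕ}
    (H : EuclideanSpace ℝ (Fin n) → ℝ)
    (hconv : ConvexOn ℝ Set.univ H)
    (hsmooth : ContDiff ℝ 2 H)
    (h0 : H 0 = 0)
    (hgrad0 : grad H 0 = 0)
    (hhess : ∀ v : EuclideanSpace ℝ (Fin n), v ≠ 0 → 0 < ⟪v, fderiv ℝ (grad H) 0 v⟫) :
    ∀ M : ℝ, ∃ K : ℝ, ∀ x : EuclideanSpace ℝ (Fin n), K ≤ ‖x‖ → M ≤ H x := by
  intro M
  have hpos (v : EuclideanSpace ℝ (Fin n)) (hv : v ≠ 0) : 0 < H v :=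
    h0 ▸ hconv.apply_zero_lt_of_inner_fderiv_gradient_pos (hsmooth.differentiable two_ne_zero)
      ((hsmooth.gradient (n := 1)).differentiable one_ne_zero 0) hgrad0 (hhess v hv)
  obtain ⟨m, hm, hgrowth⟩ := hconv.exists_pos_mul_norm_le h0 hpos
  refine ⟨max 1 (M / m), fun x hx ↦ ?_⟩
  calc M ≤ m * ‖x‖ := by rw [← div_le_iff₀' hm]; exact le_of_max_le_right hx
    _ ≤ H x := hgrowth x (le_of_max_le_left hx)
end
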